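/- arXiv:2301.10885 — 5 statements merged into one kernel-verified Lean document; each statement's English description precedes it below -/
import Mathlib

section
/- The inner product identity ⟨Φ|_{B₁A₁} ⊗ ⟨Φ|_{B₂A₂} ( |φ_k^{(l)}⟩_{B₁A₂} ⊗ |φ_{k'⊕l'}^{(l')}⟩_{B₂A₁} ) = (1/2) δ_{l,l'} δ_{k,k'} holds for all k, k', l, l' ∈ {0,1}. -/
open ComplexConjugate

/-- `|Φ⟩ = (|00⟩ + |11⟩)/√2` as a function on `Fin 2 × Fin 2`. -/
noncomputable def PhiME : Fin 2 × Fin 2 → ℂ :=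
  fun q => if q.1 = q.2 then (1 / Real.sqrt 2 : ℝ) else 0

/-- `|φᵢ^{(j)}⟩ = |i⟩⊗|i⊕j⟩`. -/
noncomputable def phiV (i j : Fin 2) : Fin 2 × Fin 2 → ℂ :=
  fun q => if q = (i, i + j) then 1 else 0

/-- `⟨Φ|_{B₁A₁}⟨Φ|_{B₂A₂} (|φ_k^{(l)}⟩_{B₁A₂} |φ_{k'⊕l'}^{(l')}⟩_{B₂A₁}) = (1/2) δ_{l,l'} δ_{k,k'}`. -/
theorem inner_product_identity (k k' l l' : Fin 2) :
    (∑ b1 : Fin 2, ∑ a1 : Fin 2, ∑ b2 : Fin 2, ∑ a2 : Fin 2,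
        conj (PhiME (b1, a1) * PhiME (b2, a2)) *
          (phiV k l (b1, a2) * phiV (k' + l') l' (b2, a1))) =
      (1 / 2 : ℂ) * (if l = l' then 1 else 0) * (if k = k' then 1 else 0) := by
  have h2 : (((Real.sqrt 2 : ℝ) : ℂ))⁻¹ * (((Real.sqrt 2 : ℝ) : ℂ))⁻¹ = 1 / 2 := by
    rw [← mul_inv, ← Complex.ofReal_mul, Real.mul_self_sqrt (by norm_num)]; norm_num
  fin_cases k <;> fin_cases k' <;> fin_cases l <;> fin_cases l' <;>
    simp [PhiME, phiV, Fin.sum_univ_two, Prod.ext_iff, map_div₀, div_mul_div_comm, one_div] <;>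
    norm_num [h2]
end

section
/- With P_a, Q_b as above and two copies of |Φ⟩ = (|00⟩+|11⟩)/√2 shared so that Alice holds B₁A₂ and Bob holds B₂A₁, the joint outcome probability equals the quantum prediction for local projective measurements on a maximally entangled two-qubit state: Tr[(P_a)_{B₁A₂} ⊗ (Q_b)_{B₂A₁} · Φ_{B₁A₁} ⊗ Φ_{B₂A₂}] = (1/2)| v_{a,0} w_{b,0} + v_{a,1} w_{b,1} |². -/
open Matrix ComplexConjugate

/-- rank-one projector `|v⟩⟨v|`. -/
noncomputable def proj2 (v : Fin 2 × Fin 2 → ℂ) : Matrix (Fin 2 × Fin 2) (Fin 2 × Fin 2) ℂ :=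
  Matrix.vecMulVec v (fun p => conj (v p))

set_option maxHeartbeats 4000000 in
theorem toy_theory_simulates_quantum_statistics (v w : Fin 2 → Fin 2 → ℂ)
    (hv : ∀ i j : Fin 2, ∑ a : Fin 2, conj (v a i) * v a j = if i = j then 1 else 0)
    (hw : ∀ i j : Fin 2, ∑ b : Fin 2, conj (w b i) * w b j = if i = j then 1 else 0)
    (a b : Fin 2) :
    let V : Fin 2 → Fin 2 → (Fin 2 × Fin 2 → ℂ) :=
      fun a l q => v a 0 * phiV 0 l q + v a 1 * phiV 1 l q
    let W : Fin 2 → Fin 2 → (Fin 2 × Fin 2 → ℂ) :=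
      fun b l q => w b 0 * phiV l l q + w b 1 * phiV (l + 1) l q
    let P : Fin 2 → Matrix (Fin 2 × Fin 2) (Fin 2 × Fin 2) ℂ :=
      fun a => ∑ l : Fin 2, proj2 (V a l)
    let Q : Fin 2 → Matrix (Fin 2 × Fin 2) (Fin 2 × Fin 2) ℂ :=
      fun b => ∑ l : Fin 2, proj2 (W b l)
    -- `(P_a)_{B₁A₂} ⊗ (Q_b)_{B₂A₁}`, on the factor ordering `(B₁, A₁, B₂, A₂)`
    let M : Matrix (Fin 2 × Fin 2 × Fin 2 × Fin 2) (Fin 2 × Fin 2 × Fin 2 × Fin 2) ℂ :=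
      Matrix.of fun q q' =>
        P a (q.1, q.2.2.2) (q'.1, q'.2.2.2) * Q b (q.2.2.1, q.2.1) (q'.2.2.1, q'.2.1)
    -- `Φ_{B₁A₁} ⊗ Φ_{B₂A₂}`
    let ρ : Matrix (Fin 2 × Fin 2 × Fin 2 × Fin 2) (Fin 2 × Fin 2 × Fin 2 × Fin 2) ℂ :=
      Matrix.of fun q q' =>
        PhiME (q.1, q.2.1) * PhiME (q.2.2.1, q.2.2.2) *
          conj (PhiME (q'.1, q'.2.1) * PhiME (q'.2.2.1, q'.2.2.2))
    (M * ρ).trace = ((1 / 2 : ℝ) * Complex.normSq (v a 0 * w b 0 + v a 1 * w b 1) : ℝ) := by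
  intro V W P Q M ρ
  have h2 : ((Real.sqrt 2 : ℝ) : ℂ) * ((Real.sqrt 2 : ℝ) : ℂ) = 2 := by
    rw [← Complex.ofReal_mul, Real.mul_self_sqrt (by norm_num)]
    norm_num
  simp only [Matrix.trace, Matrix.diag, Matrix.mul_apply, Fintype.sum_prod_type,
    Fin.sum_univ_two, M, ρ, P, Q, V, W, Matrix.of_apply, Matrix.sum_apply,
    Matrix.add_apply, proj2, Matrix.vecMulVec_apply, PhiME, phiV,
    Complex.ofReal_div, Complex.ofReal_one,
    map_add, _root_.map_mul, map_div₀, _root_.map_one, Complex.conj_ofReal]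
  simp only [show ((0:Fin 2)+0)=0 from rfl, show ((1:Fin 2)+0)=1 from rfl,
    show ((0:Fin 2)+1)=1 from rfl, show ((1:Fin 2)+1)=0 from rfl,
    show ((1:Fin 2)+1+0)=0 from rfl, show ((1:Fin 2)+1+1)=1 from rfl,
    show ((0:Fin 2)+1+0)=1 from rfl, show ((0:Fin 2)+1+1)=0 from rfl,
    show ((0:Fin 2)+0+0)=0 from rfl, show ((0:Fin 2)+0+1)=1 from rfl]
  norm_num [Prod.ext_iff, Prod.fst_one, Prod.snd_one, Prod.fst_zero, Prod.snd_zero]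
  have h3 : (((Real.sqrt 2 : ℝ) : ℂ))⁻¹ * (((Real.sqrt 2 : ℝ) : ℂ))⁻¹ = 1 / 2 := by
    rw [← mul_inv, h2]; norm_num
  rw [Complex.normSq_eq_conj_mul_self]
  simp only [map_add, _root_.map_mul, h3]
  ring
end

section
/- Let θ ∈ (0, π/2) with tan θ = 2α'β'/(α'²+β'²) for nonzero reals α', β'. Consider the two-qubit state |χ⟩ = α'|↑↑'⟩ + β'|↓↓'⟩ normalized (α'²+β'² = 1), with Alice's projectors a₀ = |↑⟩⟨↑|, a₁ = ½(|↑⟩+|↓⟩)(⟨↑|+⟨↓|) and Bob's projectors b₀, b₁ the rank-one projectors onto (cos θ+1)|↑'⟩ ± sin θ|↓'⟩ (normalized). Then the CHSH value ⟨A₀B₀⟩+⟨A₀B₁⟩+⟨A₁B₀⟩−⟨A₁B₁⟩, computed with outcomes ±1 assigned to each projector and its complement, equals 2 + 2(√(1+4α'²β'²) − 1) > 2. -/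
open Matrix ComplexConjugate Kronecker

set_option maxHeartbeats 3200000 in
theorem chsh_violation_explicit_measurements (α β θ : ℝ)
    (hα : 0 < α) (hβ : 0 < β) (hnorm : α ^ 2 + β ^ 2 = 1)
    (hθ1 : 0 < θ) (hθ2 : θ < Real.pi / 2)
    (htan : Real.tan θ = 2 * α * β / (α ^ 2 + β ^ 2)) :
    -- the two-qubit state `|χ⟩ = α|↑↑'⟩ + β|↓↓'⟩` (with `↑ = 0`, `↓ = 1`)
    let χ : Fin 2 × Fin 2 → ℂ :=
      fun q => if q = (0, 0) then (α : ℂ) else if q = (1, 1) then (β : ℂ) else 0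
    let expect : Matrix (Fin 2 × Fin 2) (Fin 2 × Fin 2) ℂ → ℂ :=
      fun M => ∑ p : Fin 2 × Fin 2, ∑ q : Fin 2 × Fin 2, conj (χ p) * M p q * χ q
    -- Alice's projectors
    let a0 : Matrix (Fin 2) (Fin 2) ℂ := !![1, 0; 0, 0]
    let a1 : Matrix (Fin 2) (Fin 2) ℂ := (1 / 2 : ℂ) • !![1, 1; 1, 1]
    -- Bob's projectors, onto `(cos θ + 1)|↑'⟩ ± sin θ|↓'⟩` (normalized)
    let ub : Bool → (Fin 2 → ℂ) :=
      fun s => ![((Real.cos θ + 1 : ℝ) : ℂ),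
        (if s then ((Real.sin θ : ℝ) : ℂ) else -((Real.sin θ : ℝ) : ℂ))]
    let bProj : Bool → Matrix (Fin 2) (Fin 2) ℂ :=
      fun s => (((1 / (2 * Real.cos θ + 2) : ℝ)) : ℂ) •
        Matrix.vecMulVec (ub s) (fun i => conj (ub s i))
    let b0 := bProj true
    let b1 := bProj false
    -- two-outcome measurements with outcomes ±1 assigned to projector and complement
    let eff : Bool → Matrix (Fin 2) (Fin 2) ℂ → Matrix (Fin 2) (Fin 2) ℂ :=
      fun s m => if s then m else 1 - m
    let sign : Bool → ℂ := fun s => if s then 1 else -1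
    let corr : Matrix (Fin 2) (Fin 2) ℂ → Matrix (Fin 2) (Fin 2) ℂ → ℂ :=
      fun A B => ∑ s : Bool, ∑ t : Bool,
        sign s * sign t * expect (eff s A ⊗ₖ eff t B)
    corr a0 b0 + corr a0 b1 + corr a1 b0 - corr a1 b1 =
        ((2 + 2 * (Real.sqrt (1 + 4 * α ^ 2 * β ^ 2) - 1) : ℝ) : ℂ) ∧
      2 < 2 + 2 * (Real.sqrt (1 + 4 * α ^ 2 * β ^ 2) - 1) := by
  have hc : 0 < Real.cos θ := Real.cos_pos_of_mem_Ioo ⟨by linarith [Real.pi_pos], hθ2⟩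
  have hs : Real.sin θ = 2 * α * β * Real.cos θ := by
    have := Real.tan_eq_sin_div_cos θ
    rw [htan, hnorm] at this
    field_simp at this
    linarith [this]
  have hsqrt : Real.sqrt (1 + 4 * α ^ 2 * β ^ 2) = 1 / Real.cos θ := by
    have h1 : 1 + 4 * α ^ 2 * β ^ 2 = (1 / Real.cos θ) ^ 2 := by
      have hpy := Real.sin_sq_add_cos_sq θ
      rw [hs] at hpy
      field_simp
      nlinarith [hpy]
    rw [h1, Real.sqrt_sq (by positivity)]
  constructor
  · set c := Real.cos θ with hcdef
    set sn := Real.sin θ with hsdef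
    have hcne : (c : ℂ) ≠ 0 := by exact_mod_cast ne_of_gt hc
    have hcne1 : (2 * c + 2 : ℂ) ≠ 0 := by
      have h : (0:ℝ) < 2 * c + 2 := by linarith
      exact_mod_cast ne_of_gt h
    have hsC : (sn : ℂ) = 2 * α * β * c := by exact_mod_cast hs
    have hnC : (α:ℂ) ^ 2 + (β:ℂ) ^ 2 = 1 := by exact_mod_cast hnorm
    have hpyC : (sn : ℂ) ^ 2 + (c : ℂ) ^ 2 = 1 := by
      exact_mod_cast (hcdef ▸ hsdef ▸ Real.sin_sq_add_cos_sq θ)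
    simp only [Fintype.sum_bool, Fintype.sum_prod_type, Fin.sum_univ_two,
      Matrix.kroneckerMap_apply, Matrix.smul_apply, Matrix.sub_apply,
      Matrix.one_apply, Matrix.vecMulVec_apply, Matrix.cons_val', Matrix.cons_val_zero,
      Matrix.cons_val_one, Matrix.head_cons, Matrix.head_fin_const, Matrix.empty_val',
      Matrix.cons_val_fin_one, smul_eq_mul, if_true, if_false, Bool.false_eq_true]
    norm_num [Prod.ext_iff, Fin.ext_iff, _root_.map_add, _root_.map_mul, _root_.map_neg, Complex.conj_ofReal]
    rw [hsqrt]
    push_cast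
    have hc2 : ((c : ℂ))^2 * (1 + 4 * (α:ℂ)^2 * (β:ℂ)^2) = 1 := by
      linear_combination hpyC - ((sn:ℂ) + 2*α*β*(c:ℂ)) * hsC
    rw [hsC]
    ring_nf
    field_simp [hcne, hcne1]
    ring_nf
    have h2c : ((2:ℂ) + (c:ℂ) * 2) ≠ 0 := fun h => hcne1 (by linear_combination h)
    have hd : ((2:ℂ) + (c:ℂ) * 2)⁻¹ * (2 + (c:ℂ) * 2) = 1 := inv_mul_cancel₀ h2c
    refine mul_left_cancel₀ h2c ?_
    have h1c : (1 + (c:ℂ)) ≠ 0 := fun h => hcne1 (by linear_combination 2 * h)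
    field_simp
    linear_combination (4 + 4*(c:ℂ)*(α:ℂ)^2) * hc2 +
      (c:ℂ) * (4 + 4*(c:ℂ) - 16*(c:ℂ)^2*(α:ℂ)^2*(β:ℂ)^2) * hnC
  · have h1 : (1:ℝ) < Real.sqrt (1 + 4 * α ^ 2 * β ^ 2) := by
      have hab : (0:ℝ) < α ^ 2 * β ^ 2 := by positivity
      have : (1:ℝ) < 1 + 4 * α ^ 2 * β ^ 2 := by nlinarith
      nlinarith [Real.sq_sqrt (show (0:ℝ) ≤ 1 + 4 * α ^ 2 * β ^ 2 by positivity),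
        Real.sqrt_nonneg (1 + 4 * α ^ 2 * β ^ 2)]
    linarith
end

section
/- Let |Φ⟩ = Σ_{x∈{0,1}^m} α_x |x⟩_{B} ⊗ X^{j}|x⟩_{A} be a pure state of m bits and m anti-bits (with X^{j} = X^{j₁}⊗⋯⊗X^{j_m} a fixed product of bit flips) and let the effect vector be |E'⟩ = Σ_{y∈{0,1}^{m'}} β_y |y⟩ ⊗ X^{l}|y⟩ on the first m' bit/anti-bit pairs (m' ≤ m). Then the conditional (unnormalized) vector (⟨E'| ⊗ I)|Φ⟩ equals Σ_{x_rest ∈ {0,1}^{m−m'}} γ_{x_rest} |x_rest⟩ ⊗ X^{j_rest}|x_rest⟩ with γ_{x_rest} = Σ_{x'} α_{x' x_rest} \overline{β_{x'}} ⟨x'| X^{j'+l} |x'⟩, i.e., the conditional state is again of the allowed parity-constrained form on the remaining m−m' pairs. -/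
open ComplexConjugate

/-- Consistency of conditional states: applying a parity-constrained effect on the first
`m'` bit/anti-bit pairs of a parity-constrained state of `m' + m''` pairs yields a
parity-constrained (unnormalized) state on the remaining `m''` pairs.
Bit strings are modelled as pairs `(x', x_rest)` of the first `m'` and last `m''` bits. -/
theorem conditional_state_consistency (m' m'' : ℕ)
    (α : ((Fin m' → Fin 2) × (Fin m'' → Fin 2)) → ℂ)
    (β : (Fin m' → Fin 2) → ℂ)
    (j' l : Fin m' → Fin 2) (jrest : Fin m'' → Fin 2) :
    -- the state `|Φ⟩ = Σ_x α_x |x⟩ ⊗ X^{j}|x⟩`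
    let Φ : ((Fin m' → Fin 2) × (Fin m'' → Fin 2)) ×
        ((Fin m' → Fin 2) × (Fin m'' → Fin 2)) → ℂ :=
      fun q => if q.2.1 = (fun i => q.1.1 i + j' i) ∧ q.2.2 = (fun i => q.1.2 i + jrest i)
        then α q.1 else 0
    -- the effect vector `|E'⟩ = Σ_y β_y |y⟩ ⊗ X^{l}|y⟩` on the first m' pairs
    let E : (Fin m' → Fin 2) × (Fin m' → Fin 2) → ℂ :=
      fun q => if q.2 = (fun i => q.1 i + l i) then β q.1 else 0
    -- `γ_{x_rest} = Σ_{x'} α_{x' x_rest} conj(β_{x'}) ⟨x'|X^{j'+l}|x'⟩`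
    let γ : (Fin m'' → Fin 2) → ℂ :=
      fun xr => ∑ x' : Fin m' → Fin 2, α (x', xr) * conj (β x') *
        (if (fun i => x' i + (j' i + l i)) = x' then 1 else 0)
    -- the conditional vector `(⟨E'| ⊗ I)|Φ⟩` on the remaining m'' pairs
    (fun q : (Fin m'' → Fin 2) × (Fin m'' → Fin 2) =>
        ∑ x' : Fin m' → Fin 2, ∑ y' : Fin m' → Fin 2,
          conj (E (x', y')) * Φ ((x', q.1), (y', q.2))) =
      (fun q => if q.2 = (fun i => q.1 i + jrest i) then γ q.1 else 0) := by
  intro Φ E γ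
  funext q
  have hE : ∀ x' y' : Fin m' → Fin 2, conj (E (x', y')) =
      if y' = (fun i => x' i + l i) then conj (β x') else 0 := by
    intro x' y'
    simp only [E, apply_ite (conj : ℂ → ℂ), map_zero]
  simp only [hE, ite_mul, zero_mul, Finset.sum_ite_eq' Finset.univ _
    (fun y' => conj (β _) * Φ ((_, q.1), (y', q.2))), Finset.mem_univ, if_true]
  simp only [Φ, γ]
  have hcond : ∀ x' : Fin m' → Fin 2, ((fun i => x' i + l i) = fun i => x' i + j' i) ↔
      ((fun i => x' i + (j' i + l i)) = x') := by
    intro x'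
    simp only [funext_iff]
    constructor <;> intro h i <;> have hi := h i <;> revert hi <;>
      · generalize x' i = a; generalize j' i = b; generalize l i = c
        revert a b c; decide
  by_cases hq : q.2 = fun i => q.1 i + jrest i
  · simp only [hq, if_true, and_true]
    apply Finset.sum_congr rfl
    intro x' _
    by_cases hc : (fun i => x' i + l i) = fun i => x' i + j' i
    · rw [if_pos hc, if_pos ((hcond x').mp hc)]; ring
    · rw [if_neg hc, if_neg (fun h => hc ((hcond x').mpr h))]; ring
  · rw [if_neg hq]
    apply Finset.sum_eq_zero
    intro x' _
    rw [if_neg (by tauto)]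
    ring
end

section
/- The linear span of the product states of a bit/anti-bit pair (i.e., of all matrices ρ₁ ⊗ ρ₂ with ρ₁, ρ₂ diagonal 2×2 density matrices) has dimension 4, whereas the real linear span of all allowed states of the (1,1)-composite (convex combinations of projectors onto parity-definite pure states) has dimension 8. Hence the toy theory violates Local Tomography: the state space of the composite is not contained in the span of the product states. -/
open Matrix ComplexConjugate Kronecker

/-- basis vector `|i⟩⊗|j⟩`. -/
noncomputable def ket2 (i j : Fin 2) : Fin 2 × Fin 2 → ℂ :=
  fun p => if p = (i, j) then 1 else 0

/-- parity projectors. -/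
noncomputable def PiPar : Fin 2 → Matrix (Fin 2 × Fin 2) (Fin 2 × Fin 2) ℂ :=
  fun k => if k = 0 then proj2 (ket2 0 0) + proj2 (ket2 1 1)
    else proj2 (ket2 0 1) + proj2 (ket2 1 0)

/-- diagonal `2×2` density matrices (classical bit states). -/
def DiagDensity : Set (Matrix (Fin 2) (Fin 2) ℂ) :=
  {M | ∃ p : ℝ, 0 ≤ p ∧ p ≤ 1 ∧
    M = Matrix.diagonal (fun i : Fin 2 => if i = 0 then (p : ℂ) else ((1 - p : ℝ) : ℂ))}

/-- product states of a bit/anti-bit pair. -/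
def ProductStates : Set (Matrix (Fin 2 × Fin 2) (Fin 2 × Fin 2) ℂ) :=
  {ρ | ∃ M₁ ∈ DiagDensity, ∃ M₂ ∈ DiagDensity, ρ = M₁ ⊗ₖ M₂}

/-- parity-definite pure states of the (1,1)-composite. -/
noncomputable def ParityPureStates : Set (Matrix (Fin 2 × Fin 2) (Fin 2 × Fin 2) ℂ) :=
  {P | ∃ Ψ : Fin 2 × Fin 2 → ℂ, (∑ p : Fin 2 × Fin 2, Complex.normSq (Ψ p) = 1) ∧
    ((PiPar 0).mulVec Ψ = Ψ ∨ (PiPar 1).mulVec Ψ = Ψ) ∧ P = proj2 Ψ}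

/-- allowed states of the (1,1)-composite: convex combinations of parity-definite
pure states. -/
noncomputable def AllowedStates : Set (Matrix (Fin 2 × Fin 2) (Fin 2 × Fin 2) ℂ) :=
  convexHull ℝ ParityPureStates

/-! ### Auxiliary machinery -/

abbrev Ix := Fin 2 × Fin 2
abbrev Mat := Matrix Ix Ix ℂ

noncomputable def Eb (p q : Ix) : Mat := Matrix.single p q (1:ℂ)

noncomputable def g4 : Fin 4 → Mat
  | 0 => Eb (0,0) (0,0)
  | 1 => Eb (0,1) (0,1)
  | 2 => Eb (1,0) (1,0)
  | 3 => Eb (1,1) (1,1)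

noncomputable def g8 : Fin 8 → Mat
  | 0 => Eb (0,0) (0,0)
  | 1 => Eb (1,1) (1,1)
  | 2 => Eb (0,0) (1,1) + Eb (1,1) (0,0)
  | 3 => Complex.I • Eb (0,0) (1,1) - Complex.I • Eb (1,1) (0,0)
  | 4 => Eb (0,1) (0,1)
  | 5 => Eb (1,0) (1,0)
  | 6 => Eb (0,1) (1,0) + Eb (1,0) (0,1)
  | 7 => Complex.I • Eb (0,1) (1,0) - Complex.I • Eb (1,0) (0,1)

lemma kronDecomp (p q : ℝ) :
    (Matrix.diagonal (fun i : Fin 2 => if i = 0 then (p:ℂ) else ((1-p:ℝ):ℂ))) ⊗ₖ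
      (Matrix.diagonal (fun i : Fin 2 => if i = 0 then (q:ℂ) else ((1-q:ℝ):ℂ)))
    = (p*q) • Eb (0,0) (0,0) + (p*(1-q)) • Eb (0,1) (0,1)
      + ((1-p)*q) • Eb (1,0) (1,0) + ((1-p)*(1-q)) • Eb (1,1) (1,1) := by
  rw [Matrix.diagonal_kronecker_diagonal]
  ext ⟨i,j⟩ ⟨k,l⟩
  fin_cases i <;> fin_cases j <;> fin_cases k <;> fin_cases l <;>
    simp [Eb, Matrix.single, Matrix.diagonal, Prod.ext_iff, Complex.real_smul]

lemma evenDecomp (Ψ : Ix → ℂ) (hb : Ψ (0,1) = 0) (hc : Ψ (1,0) = 0) :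
    proj2 Ψ
    = (Complex.normSq (Ψ (0,0))) • Eb (0,0) (0,0)
      + (Complex.normSq (Ψ (1,1))) • Eb (1,1) (1,1)
      + (Ψ (0,0) * conj (Ψ (1,1))).re • (Eb (0,0) (1,1) + Eb (1,1) (0,0))
      + (Ψ (0,0) * conj (Ψ (1,1))).im •
          (Complex.I • Eb (0,0) (1,1) - Complex.I • Eb (1,1) (0,0)) := by
  ext ⟨i,j⟩ ⟨k,l⟩
  fin_cases i <;> fin_cases j <;> fin_cases k <;> fin_cases l <;>
    simp [proj2, Eb, Matrix.single, vecMulVec_apply, Prod.ext_iff,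
      Complex.real_smul, Complex.ext_iff, Complex.normSq, hb, hc] <;>
    ring_nf <;> try simp

lemma oddDecomp (Ψ : Ix → ℂ) (hb : Ψ (0,0) = 0) (hc : Ψ (1,1) = 0) :
    proj2 Ψ
    = (Complex.normSq (Ψ (0,1))) • Eb (0,1) (0,1)
      + (Complex.normSq (Ψ (1,0))) • Eb (1,0) (1,0)
      + (Ψ (0,1) * conj (Ψ (1,0))).re • (Eb (0,1) (1,0) + Eb (1,0) (0,1))
      + (Ψ (0,1) * conj (Ψ (1,0))).im •
          (Complex.I • Eb (0,1) (1,0) - Complex.I • Eb (1,0) (0,1)) := by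
  have hb' : Ψ 0 = 0 := hb
  have hc' : Ψ 1 = 0 := hc
  ext ⟨i,j⟩ ⟨k,l⟩
  fin_cases i <;> fin_cases j <;> fin_cases k <;> fin_cases l <;>
    simp [proj2, Eb, Matrix.single, vecMulVec_apply, Prod.ext_iff,
      Complex.real_smul, Complex.ext_iff, Complex.normSq, hb, hc, hb', hc'] <;> ring_nf <;> simp_all

lemma evenVanish (Ψ : Ix → ℂ) (h : (PiPar 0).mulVec Ψ = Ψ) : Ψ (0,1) = 0 ∧ Ψ (1,0) = 0 := by
  have h1 := congrFun h (0,1)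
  have h2 := congrFun h (1,0)
  simp [PiPar, proj2, ket2, Matrix.mulVec, dotProduct, Fintype.sum_prod_type,
    Fin.sum_univ_two, vecMulVec_apply, Prod.ext_iff] at h1 h2
  exact ⟨h1.symm, h2.symm⟩

lemma oddVanish (Ψ : Ix → ℂ) (h : (PiPar 1).mulVec Ψ = Ψ) : Ψ (0,0) = 0 ∧ Ψ (1,1) = 0 := by
  have h1 := congrFun h (0,0)
  have h2 := congrFun h (1,1)
  simp [PiPar, proj2, ket2, Matrix.mulVec, dotProduct, Fintype.sum_prod_type,
    Fin.sum_univ_two, vecMulVec_apply, Prod.ext_iff] at h1 h2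
  exact ⟨h1.symm, h2.symm⟩

lemma evenFix (Ψ : Ix → ℂ) (hb : Ψ (0,1) = 0) (hc : Ψ (1,0) = 0) :
    (PiPar 0).mulVec Ψ = Ψ := by
  funext p
  obtain ⟨i,j⟩ := p
  fin_cases i <;> fin_cases j <;>
    simp [PiPar, proj2, ket2, Matrix.mulVec, dotProduct, Fintype.sum_prod_type,
      Fin.sum_univ_two, vecMulVec_apply, Prod.ext_iff, hb, hc]

lemma oddFix (Ψ : Ix → ℂ) (hb : Ψ (0,0) = 0) (hc : Ψ (1,1) = 0) :
    (PiPar 1).mulVec Ψ = Ψ := by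
  have hb' : Ψ 0 = 0 := hb
  have hc' : Ψ 1 = 0 := hc
  funext p
  obtain ⟨i,j⟩ := p
  fin_cases i <;> fin_cases j <;>
    simp [PiPar, proj2, ket2, Matrix.mulVec, dotProduct, Fintype.sum_prod_type,
      Fin.sum_univ_two, vecMulVec_apply, Prod.ext_iff, hb, hc, hb', hc'] <;> simp_all

/-- the pure state with amplitudes x at (0,0) and y at (1,1) (even block). -/
noncomputable def evenVec (x y : ℂ) : Ix → ℂ :=
  fun p => if p = (0,0) then x else if p = (1,1) then y else 0

noncomputable def oddVec (x y : ℂ) : Ix → ℂ :=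
  fun p => if p = (0,1) then x else if p = (1,0) then y else 0

lemma evenVec_mem (x y : ℂ) (h : Complex.normSq x + Complex.normSq y = 1) :
    proj2 (evenVec x y) ∈ ParityPureStates := by
  refine ⟨evenVec x y, ?_, Or.inl (evenFix _ rfl rfl), rfl⟩
  simp [Fintype.sum_prod_type, Fin.sum_univ_two, evenVec, Prod.ext_iff]
  simpa using h

lemma oddVec_mem (x y : ℂ) (h : Complex.normSq x + Complex.normSq y = 1) :
    proj2 (oddVec x y) ∈ ParityPureStates := by
  refine ⟨oddVec x y, ?_, Or.inr (oddFix _ rfl rfl), rfl⟩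
  simp [Fintype.sum_prod_type, Fin.sum_univ_two, oddVec, Prod.ext_iff]
  simpa using h

lemma li4 : LinearIndependent ℝ g4 := by
  rw [Fintype.linearIndependent_iff]
  intro g h i
  have key : ∀ p q : Ix, (∑ j, g j • g4 j) p q = 0 := by
    intro p q; rw [h]; simp
  have h0 := key (0,0) (0,0)
  have h1 := key (0,1) (0,1)
  have h2 := key (1,0) (1,0)
  have h3 := key (1,1) (1,1)
  simp [Matrix.sum_apply, Fin.sum_univ_four, g4, Eb, Matrix.single, Prod.ext_iff,
    Complex.real_smul, Complex.ext_iff] at h0 h1 h2 h3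
  fin_cases i <;> assumption

set_option maxHeartbeats 2000000 in
lemma li8 : LinearIndependent ℝ g8 := by
  rw [Fintype.linearIndependent_iff]
  intro g h i
  have key : ∀ p q : Ix, (∑ j, g j • g8 j) p q = 0 := by
    intro p q; rw [h]; simp
  have h0 := key (0,0) (0,0)
  have h1 := key (1,1) (1,1)
  have h2 := key (0,0) (1,1)
  have h4 := key (0,1) (0,1)
  have h5 := key (1,0) (1,0)
  have h6 := key (0,1) (1,0)
  simp [Matrix.sum_apply, Fin.sum_univ_eight, g8, Eb, Matrix.single, Prod.ext_iff,
    Complex.real_smul, Complex.ext_iff] at h0 h1 h2 h4 h5 h6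
  fin_cases i <;> simp_all

lemma diagDensity_mem (p : ℝ) (h0 : 0 ≤ p) (h1 : p ≤ 1) :
    Matrix.diagonal (fun i : Fin 2 => if i = 0 then (p : ℂ) else ((1 - p : ℝ) : ℂ))
      ∈ DiagDensity := ⟨p, h0, h1, rfl⟩

lemma span_prod : Submodule.span ℝ ProductStates = Submodule.span ℝ (Set.range g4) := by
  apply le_antisymm
  · rw [Submodule.span_le]
    rintro ρ ⟨M₁, ⟨p, _, _, rfl⟩, M₂, ⟨q, _, _, rfl⟩, rfl⟩
    rw [kronDecomp]
    refine SetLike.mem_coe.2 ?_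
    have m0 : g4 0 ∈ Submodule.span ℝ (Set.range g4) := Submodule.subset_span ⟨0, rfl⟩
    have m1 : g4 1 ∈ Submodule.span ℝ (Set.range g4) := Submodule.subset_span ⟨1, rfl⟩
    have m2 : g4 2 ∈ Submodule.span ℝ (Set.range g4) := Submodule.subset_span ⟨2, rfl⟩
    have m3 : g4 3 ∈ Submodule.span ℝ (Set.range g4) := Submodule.subset_span ⟨3, rfl⟩
    simp only [g4] at m0 m1 m2 m3
    exact Submodule.add_mem _ (Submodule.add_mem _ (Submodule.add_mem _
      (Submodule.smul_mem _ _ m0) (Submodule.smul_mem _ _ m1))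
      (Submodule.smul_mem _ _ m2)) (Submodule.smul_mem _ _ m3)
  · rw [Submodule.span_le]
    rintro ρ ⟨i, rfl⟩
    refine SetLike.mem_coe.2 (Submodule.subset_span ?_)
    fin_cases i
    · exact ⟨_, diagDensity_mem 1 zero_le_one le_rfl, _, diagDensity_mem 1 zero_le_one le_rfl,
        by rw [kronDecomp]; norm_num [g4]⟩
    · exact ⟨_, diagDensity_mem 1 zero_le_one le_rfl, _, diagDensity_mem 0 le_rfl zero_le_one,
        by rw [kronDecomp]; norm_num [g4]⟩
    · exact ⟨_, diagDensity_mem 0 le_rfl zero_le_one, _, diagDensity_mem 1 zero_le_one le_rfl,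
        by rw [kronDecomp]; norm_num [g4]⟩
    · exact ⟨_, diagDensity_mem 0 le_rfl zero_le_one, _, diagDensity_mem 0 le_rfl zero_le_one,
        by rw [kronDecomp]; norm_num [g4]⟩

noncomputable def rr : ℝ := (Real.sqrt 2)⁻¹

lemma rr_sq : rr * rr = 1/2 := by
  rw [rr, ← mul_inv, Real.mul_self_sqrt (by norm_num)]; norm_num

lemma rr_norm : Complex.normSq (rr : ℂ) + Complex.normSq (rr : ℂ) = 1 := by
  simp [Complex.normSq_ofReal, rr_sq]
  norm_num

lemma rr_normI : Complex.normSq (rr : ℂ) + Complex.normSq ((rr : ℂ) * Complex.I) = 1 := by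
  simp [Complex.normSq_ofReal, rr_sq]; norm_num

lemma span_allowed : Submodule.span ℝ AllowedStates = Submodule.span ℝ (Set.range g8) := by
  apply le_antisymm
  · rw [Submodule.span_le]
    have hPPS : ParityPureStates ⊆ (Submodule.span ℝ (Set.range g8) : Set Mat) := by
      rintro P ⟨Ψ, _, hfix, rfl⟩
      have mg : ∀ i : Fin 8, g8 i ∈ Submodule.span ℝ (Set.range g8) :=
        fun i => Submodule.subset_span ⟨i, rfl⟩
      rcases hfix with hfix | hfix
      · obtain ⟨hb, hc⟩ := evenVanish Ψ hfix
        rw [evenDecomp Ψ hb hc]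
        have m0 := mg 0; have m1 := mg 1; have m2 := mg 2; have m3 := mg 3
        simp only [g8] at m0 m1 m2 m3
        exact SetLike.mem_coe.2 (Submodule.add_mem _ (Submodule.add_mem _ (Submodule.add_mem _
          (Submodule.smul_mem _ _ m0) (Submodule.smul_mem _ _ m1))
          (Submodule.smul_mem _ _ m2)) (Submodule.smul_mem _ _ m3))
      · obtain ⟨hb, hc⟩ := oddVanish Ψ hfix
        rw [oddDecomp Ψ hb hc]
        have m4 := mg 4; have m5 := mg 5; have m6 := mg 6; have m7 := mg 7
        simp only [g8] at m4 m5 m6 m7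
        exact SetLike.mem_coe.2 (Submodule.add_mem _ (Submodule.add_mem _ (Submodule.add_mem _
          (Submodule.smul_mem _ _ m4) (Submodule.smul_mem _ _ m5))
          (Submodule.smul_mem _ _ m6)) (Submodule.smul_mem _ _ m7))
    exact convexHull_min hPPS (Submodule.convex _)
  · rw [Submodule.span_le]
    rintro ρ ⟨i, rfl⟩
    have hA : ∀ P ∈ ParityPureStates, P ∈ Submodule.span ℝ AllowedStates :=
      fun P hP => Submodule.subset_span (subset_convexHull ℝ _ hP)
    have e00 : proj2 (evenVec 1 0) ∈ Submodule.span ℝ AllowedStates :=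
      hA _ (evenVec_mem 1 0 (by simp))
    have e11 : proj2 (evenVec 0 1) ∈ Submodule.span ℝ AllowedStates :=
      hA _ (evenVec_mem 0 1 (by simp))
    have eP : proj2 (evenVec (rr:ℂ) (rr:ℂ)) ∈ Submodule.span ℝ AllowedStates :=
      hA _ (evenVec_mem _ _ rr_norm)
    have eI : proj2 (evenVec (rr:ℂ) ((rr:ℂ)*Complex.I)) ∈ Submodule.span ℝ AllowedStates :=
      hA _ (evenVec_mem _ _ rr_normI)
    have o00 : proj2 (oddVec 1 0) ∈ Submodule.span ℝ AllowedStates :=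
      hA _ (oddVec_mem 1 0 (by simp))
    have o11 : proj2 (oddVec 0 1) ∈ Submodule.span ℝ AllowedStates :=
      hA _ (oddVec_mem 0 1 (by simp))
    have oP : proj2 (oddVec (rr:ℂ) (rr:ℂ)) ∈ Submodule.span ℝ AllowedStates :=
      hA _ (oddVec_mem _ _ rr_norm)
    have oI : proj2 (oddVec (rr:ℂ) ((rr:ℂ)*Complex.I)) ∈ Submodule.span ℝ AllowedStates :=
      hA _ (oddVec_mem _ _ rr_normI)
    have hrr : ((rr:ℂ) * conj (rr:ℂ)).re = 1/2 := by
      simp [Complex.conj_ofReal, ← Complex.ofReal_mul, rr_sq]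
    have de00 : proj2 (evenVec 1 0) = Eb (0,0) (0,0) := by
      rw [evenDecomp _ rfl rfl]; norm_num [evenVec]
    have de11 : proj2 (evenVec 0 1) = Eb (1,1) (1,1) := by
      rw [evenDecomp _ rfl rfl]; norm_num [evenVec]
    have deP : Eb (0,0) (1,1) + Eb (1,1) (0,0)
        = (2:ℝ) • proj2 (evenVec (rr:ℂ) (rr:ℂ)) - Eb (0,0) (0,0) - Eb (1,1) (1,1) := by
      rw [evenDecomp _ rfl rfl]
      simp only [evenVec, if_pos rfl]
      norm_num [Complex.normSq_ofReal, rr_sq, hrr, Complex.conj_ofReal,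
        ← Complex.ofReal_mul]
      try module
    have deI : Complex.I • Eb (0,0) (1,1) - Complex.I • Eb (1,1) (0,0)
        = Eb (0,0) (0,0) + Eb (1,1) (1,1)
          - (2:ℝ) • proj2 (evenVec (rr:ℂ) ((rr:ℂ)*Complex.I)) := by
      rw [evenDecomp _ rfl rfl]
      simp only [evenVec, if_pos rfl]
      simp [Complex.normSq_ofReal, Complex.normSq_mul, rr_sq, Complex.conj_ofReal,
        mul_comm, mul_assoc, ← Complex.ofReal_mul, Complex.ext_iff]
      try module
    have do00 : proj2 (oddVec 1 0) = Eb (0,1) (0,1) := by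
      rw [oddDecomp _ rfl rfl]; norm_num [oddVec]
    have do11 : proj2 (oddVec 0 1) = Eb (1,0) (1,0) := by
      rw [oddDecomp _ rfl rfl]; norm_num [oddVec]
    have doP : Eb (0,1) (1,0) + Eb (1,0) (0,1)
        = (2:ℝ) • proj2 (oddVec (rr:ℂ) (rr:ℂ)) - Eb (0,1) (0,1) - Eb (1,0) (1,0) := by
      rw [oddDecomp _ rfl rfl]
      simp only [oddVec, if_pos rfl]
      norm_num [Complex.normSq_ofReal, rr_sq, hrr, Complex.conj_ofReal,
        ← Complex.ofReal_mul]
      try module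
    have doI : Complex.I • Eb (0,1) (1,0) - Complex.I • Eb (1,0) (0,1)
        = Eb (0,1) (0,1) + Eb (1,0) (1,0)
          - (2:ℝ) • proj2 (oddVec (rr:ℂ) ((rr:ℂ)*Complex.I)) := by
      rw [oddDecomp _ rfl rfl]
      simp only [oddVec, if_pos rfl]
      simp [Complex.normSq_ofReal, Complex.normSq_mul, rr_sq, Complex.conj_ofReal,
        mul_comm, mul_assoc, ← Complex.ofReal_mul, Complex.ext_iff]
      try module
    fin_cases i <;> simp only [g8]
    · exact SetLike.mem_coe.2 (de00 ▸ e00)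
    · exact SetLike.mem_coe.2 (de11 ▸ e11)
    · refine SetLike.mem_coe.2 (deP ▸ ?_)
      exact Submodule.sub_mem _ (Submodule.sub_mem _ (Submodule.smul_mem _ _ eP)
        (de00 ▸ e00)) (de11 ▸ e11)
    · refine SetLike.mem_coe.2 (deI ▸ ?_)
      exact Submodule.sub_mem _ (Submodule.add_mem _ (de00 ▸ e00) (de11 ▸ e11))
        (Submodule.smul_mem _ _ eI)
    · exact SetLike.mem_coe.2 (do00 ▸ o00)
    · exact SetLike.mem_coe.2 (do11 ▸ o11)
    · refine SetLike.mem_coe.2 (doP ▸ ?_)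
      exact Submodule.sub_mem _ (Submodule.sub_mem _ (Submodule.smul_mem _ _ oP)
        (do00 ▸ o00)) (do11 ▸ o11)
    · refine SetLike.mem_coe.2 (doI ▸ ?_)
      exact Submodule.sub_mem _ (Submodule.add_mem _ (do00 ▸ o00) (do11 ▸ o11))
        (Submodule.smul_mem _ _ oI)

theorem local_tomography_violation :
    Module.finrank ℝ (Submodule.span ℝ ProductStates) = 4 ∧
    Module.finrank ℝ (Submodule.span ℝ AllowedStates) = 8 ∧
    ¬ AllowedStates ⊆ (Submodule.span ℝ ProductStates : Set _) := by
  refine ⟨?_, ?_, ?_⟩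
  · rw [span_prod, finrank_span_eq_card li4]; simp
  · rw [span_allowed, finrank_span_eq_card li8]; simp
  · intro hsub
    have hP : proj2 (evenVec (rr:ℂ) (rr:ℂ)) ∈ AllowedStates :=
      subset_convexHull ℝ _ (evenVec_mem _ _ rr_norm)
    have hmem := hsub hP
    rw [SetLike.mem_coe, span_prod] at hmem
    have hzero : ∀ x ∈ Submodule.span ℝ (Set.range g4), x (0,0) (1,1) = 0 := by
      intro x hx
      induction hx using Submodule.span_induction with
      | mem x hx =>
        obtain ⟨i, rfl⟩ := hx
        fin_cases i <;> simp [g4, Eb, Matrix.single, Prod.ext_iff]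
      | zero => simp
      | add x y _ _ hx hy =>
        show (x + y) (0,0) (1,1) = 0
        rw [Matrix.add_apply, hx, hy, add_zero]
      | smul c x _ hx =>
        show (c • x) (0,0) (1,1) = 0
        rw [Matrix.smul_apply, hx, smul_zero]
    have := hzero _ hmem
    rw [evenDecomp _ rfl rfl] at this
    simp only [evenVec, if_pos rfl] at this
    simp [Eb, Matrix.single, Prod.ext_iff, Complex.real_smul, Complex.ext_iff,
      Complex.normSq_ofReal, Complex.conj_ofReal, ← Complex.ofReal_mul, rr_sq] at this
end
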